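/- Let G be the complement of a bipartite graph with color classes A and B (so G[A] and G[B] are complete graphs and the edges of G between A and B are the non-edges of the bipartite graph). Then every HC-tree of G whose root separates A from B (i.e., one child subtree contains exactly the vertices of A and the other exactly the vertices of B) has minimum DC-cost among all HC-trees of G. -/

import Mathlib

/-!
Every pair of distinct leaves is an edge of exactly one of `G` and `Gᶜ`, so
`dcCost G T + dcCost Gᶜ T = (n³ - n) / 3` depends only on the number `n` of vertices: minimising
the cost of `G` is maximising the cost of `Gᶜ`. Each edge of `Gᶜ` contributes at most `n`, with
equality when it is split at the root. As `Gᶜ` is bipartite with classes `A` and `B`, a tree whose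
root separates `A` from `B` splits every edge of `Gᶜ` at the root, so it attains the maximum
`n · |E(Gᶜ)|`.
-/

/-- A rooted binary tree whose leaves are labelled by vertices of type `V`.
Every internal node has exactly two children. -/
inductive HCTree (V : Type) where
  | leaf : V → HCTree V
  | node : HCTree V → HCTree V → HCTree V

namespace HCTree

/-- The list of leaf labels of an HC-tree, from left to right. -/
def leaves {V : Type} : HCTree V → List V
  | leaf v => [v]
  | node l r => leaves l ++ leaves r

open Classical in
/-- The Dasgupta cost of an HC-tree on a graph `G`: the sum over all edges `uv` of `G`
of the number of leaves of the subtree rooted at the least common ancestor of `u` and `v`.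
Equivalently (as computed here, recursively), at each internal node we add
(number of leaves below the node) times (number of edges split at that node). -/
noncomputable def dcCost {V : Type} (G : SimpleGraph V) : HCTree V → ℕ
  | leaf _ => 0
  | node l r =>
      dcCost G l + dcCost G r +
        (l.leaves.length + r.leaves.length) *
          (l.leaves.map (fun u => r.leaves.countP (fun v => decide (G.Adj u v)))).sum

end HCTree

open HCTree

/-- `T` together with the implicit leaf labelling is an HC-tree of a graph on vertex set `V`:
the leaf labels are pairwise distinct and every vertex occurs as a leaf label,
i.e. the labelling is a bijection between `V` and the leaves of `T`. -/
def IsHCTree {V : Type} (T : HCTree V) : Prop :=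
  T.leaves.Nodup ∧ ∀ v : V, v ∈ T.leaves

/-- `W` is the maximum DC-cost over all HC-trees of `G`. -/
def IsMaxCost {V : Type} (G : SimpleGraph V) (W : ℕ) : Prop :=
  (∃ T : HCTree V, IsHCTree T ∧ dcCost G T = W) ∧
  ∀ T : HCTree V, IsHCTree T → dcCost G T ≤ W

/-- `W` is the minimum DC-cost over all HC-trees of `G`. -/
def IsMinCost {V : Type} (G : SimpleGraph V) (W : ℕ) : Prop :=
  (∃ T : HCTree V, IsHCTree T ∧ dcCost G T = W) ∧
  ∀ T : HCTree V, IsHCTree T → W ≤ dcCost G T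

/-- The disjoint union `G^(k)` of `k` copies of `G`, on vertex set `V × Fin k`. -/
def copies {V : Type} (G : SimpleGraph V) (k : ℕ) : SimpleGraph (V × Fin k) where
  Adj a b := a.2 = b.2 ∧ G.Adj a.1 b.1
  symm := ⟨fun _ _ h => ⟨h.1.symm, h.2.symm⟩⟩
  loopless := ⟨fun a h => G.loopless.irrefl a.1 h.2⟩

namespace HCTree

variable {V : Type}

open Classical

/-- Ordered pairs `(u, v) ∈ x × y` with `G.Adj u v`: the factor that `dcCost` attaches to a node. -/
noncomputable def crossCount (G : SimpleGraph V) (x y : List V) : ℕ :=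
  (x.map fun u => y.countP fun v => decide (G.Adj u v)).sum

noncomputable def edgeCount (G : SimpleGraph V) : HCTree V → ℕ
  | leaf _ => 0
  | node l r => edgeCount G l + edgeCount G r + crossCount G l.leaves r.leaves

section crossCount

variable (G : SimpleGraph V)

lemma crossCount_cons_left (a : V) (x y : List V) :
    crossCount G (a :: x) y = y.countP (fun v => decide (G.Adj a v)) + crossCount G x y := by
  simp [crossCount]

lemma crossCount_cons_right (a : V) (x y : List V) :
    crossCount G x (a :: y) = crossCount G x y + x.countP (fun u => decide (G.Adj u a)) := by
  induction x with
  | nil => simp [crossCount]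
  | cons b x ih =>
    simp only [crossCount_cons_left, ih, List.countP_cons]
    ring

lemma crossCount_comm (x y : List V) : crossCount G x y = crossCount G y x := by
  induction x with
  | nil => simp [crossCount]
  | cons a x ih =>
    rw [crossCount_cons_left, crossCount_cons_right, ih, add_comm]
    simp only [G.adj_comm]

lemma crossCount_append_left (x x' y : List V) :
    crossCount G (x ++ x') y = crossCount G x y + crossCount G x' y := by
  simp [crossCount]

lemma crossCount_append_right (x y y' : List V) :
    crossCount G x (y ++ y') = crossCount G x y + crossCount G x y' := by
  rw [crossCount_comm, crossCount_append_left, crossCount_comm G y, crossCount_comm G y']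

lemma crossCount_eq_zero_iff {x y : List V} :
    crossCount G x y = 0 ↔ ∀ u ∈ x, ∀ v ∈ y, ¬G.Adj u v := by
  simp only [crossCount, List.sum_eq_zero_iff, List.mem_map, forall_exists_index, and_imp,
    forall_apply_eq_imp_iff₂, List.countP_eq_zero, decide_eq_true_eq]

lemma crossCount_congr_perm {x x' y y' : List V} (hx : x.Perm x') (hy : y.Perm y') :
    crossCount G x y = crossCount G x' y' := by
  unfold crossCount
  rw [(hx.map _).sum_eq]
  simp only [hy.countP_eq]

lemma crossCount_add_crossCount_compl {x y : List V} (h : ∀ u ∈ x, u ∉ y) :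
    crossCount G x y + crossCount Gᶜ x y = x.length * y.length := by
  unfold crossCount
  rw [← List.sum_map_add, List.map_congr_left (g := fun _ => y.length), List.map_const',
    List.sum_replicate, smul_eq_mul]
  intro u hu
  rw [y.length_eq_countP_add_countP (fun v => decide (G.Adj u v))]
  congr 1
  refine List.countP_congr fun v hv => ?_
  have : u ≠ v := fun huv => h u hu (huv ▸ hv)
  simp [SimpleGraph.compl_adj, this]

end crossCount

lemma dcCost_node (G : SimpleGraph V) (l r : HCTree V) :
    dcCost G (node l r) = dcCost G l + dcCost G r +
      (l.leaves.length + r.leaves.length) * crossCount G l.leaves r.leaves := rfl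

lemma two_mul_edgeCount (G : SimpleGraph V) (T : HCTree V) :
    2 * edgeCount G T = crossCount G T.leaves T.leaves := by
  induction T with
  | leaf v => simp [edgeCount, crossCount, leaves]
  | node l r ihl ihr =>
    simp only [edgeCount, leaves, crossCount_append_left, crossCount_append_right, ← ihl, ← ihr,
      crossCount_comm G r.leaves l.leaves]
    ring

lemma edgeCount_congr_perm (G : SimpleGraph V) {T T' : HCTree V} (h : T.leaves.Perm T'.leaves) :
    edgeCount G T = edgeCount G T' := by
  have := crossCount_congr_perm G h h
  rw [← two_mul_edgeCount, ← two_mul_edgeCount] at this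
  omega

lemma dcCost_le_length_mul_edgeCount (G : SimpleGraph V) (T : HCTree V) :
    dcCost G T ≤ T.leaves.length * edgeCount G T := by
  induction T with
  | leaf v => simp [dcCost]
  | node l r ihl ihr =>
    rw [dcCost_node, edgeCount, leaves, List.length_append]
    nlinarith

lemma three_mul_dcCost_add_dcCost_compl (G : SimpleGraph V) {T : HCTree V} (hT : T.leaves.Nodup) :
    3 * (dcCost G T + dcCost Gᶜ T) + T.leaves.length = T.leaves.length ^ 3 := by
  induction T with
  | leaf v => simp [dcCost, leaves]
  | node l r ihl ihr =>
    rw [leaves, List.nodup_append] at hT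
    obtain ⟨hl, hr, hlr⟩ := hT
    have hsplit := crossCount_add_crossCount_compl G fun u hu hu' => hlr u hu u hu' rfl
    have hcost_l := ihl hl
    have hcost_r := ihr hr
    rw [dcCost_node, dcCost_node, leaves, List.length_append]
    nlinarith

lemma dcCost_node_eq_length_mul_edgeCount (G : SimpleGraph V) {l r : HCTree V}
    (hl : crossCount G l.leaves l.leaves = 0) (hr : crossCount G r.leaves r.leaves = 0) :
    dcCost G (node l r) = (node l r).leaves.length * edgeCount G (node l r) := by
  have hel : edgeCount G l = 0 := by linarith [two_mul_edgeCount G l]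
  have her : edgeCount G r = 0 := by linarith [two_mul_edgeCount G r]
  have hdl : dcCost G l = 0 := by simpa [hel] using dcCost_le_length_mul_edgeCount G l
  have hdr : dcCost G r = 0 := by simpa [her] using dcCost_le_length_mul_edgeCount G r
  simp [dcCost_node, edgeCount, leaves, hel, her, hdl, hdr]

lemma dcCost_le_dcCost_node_of_perm (G : SimpleGraph V) {l r T : HCTree V}
    (hl : crossCount G l.leaves l.leaves = 0) (hr : crossCount G r.leaves r.leaves = 0)
    (hT : T.leaves.Perm (node l r).leaves) :
    dcCost G T ≤ dcCost G (node l r) :=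
  calc dcCost G T ≤ T.leaves.length * edgeCount G T := dcCost_le_length_mul_edgeCount G T
    _ = (node l r).leaves.length * edgeCount G (node l r) := by
      rw [hT.length_eq, edgeCount_congr_perm G hT]
    _ = dcCost G (node l r) := (dcCost_node_eq_length_mul_edgeCount G hl hr).symm

lemma dcCost_le_of_dcCost_compl_le (G : SimpleGraph V) {T T' : HCTree V} (hT : T.leaves.Nodup)
    (hperm : T.leaves.Perm T'.leaves) (h : dcCost Gᶜ T' ≤ dcCost Gᶜ T) :
    dcCost G T ≤ dcCost G T' := by
  have hcost := three_mul_dcCost_add_dcCost_compl G hT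
  have hcost' := three_mul_dcCost_add_dcCost_compl G (hperm.nodup_iff.1 hT)
  rw [hperm.length_eq] at *
  omega

end HCTree

lemma IsHCTree.perm {V : Type} {T T' : HCTree V} (hT : IsHCTree T) (hT' : IsHCTree T') :
    T.leaves.Perm T'.leaves :=
  (List.perm_ext_iff_of_nodup hT.1 hT'.1).2 fun v => iff_of_true (hT.2 v) (hT'.2 v)

theorem compl_bipartite_root_split_minCost_general {V : Type} (G : SimpleGraph V)
    (A : Set V)
    (hA : ∀ u v : V, u ∈ A → v ∈ A → u ≠ v → G.Adj u v)
    (hB : ∀ u v : V, u ∉ A → v ∉ A → u ≠ v → G.Adj u v)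
    (L R : HCTree V) (hT : IsHCTree (HCTree.node L R))
    (hL : ∀ v ∈ L.leaves, v ∈ A) (hR : ∀ v ∈ R.leaves, v ∉ A) :
    ∀ T' : HCTree V, IsHCTree T' → dcCost G (HCTree.node L R) ≤ dcCost G T' := by
  intro T' hT'
  have hL_compl : crossCount Gᶜ L.leaves L.leaves = 0 :=
    (crossCount_eq_zero_iff Gᶜ).2 fun u hu v hv huv =>
      huv.2 (hA u v (hL u hu) (hL v hv) huv.1)
  have hR_compl : crossCount Gᶜ R.leaves R.leaves = 0 :=
    (crossCount_eq_zero_iff Gᶜ).2 fun u hu v hv huv =>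
      huv.2 (hB u v (hR u hu) (hR v hv) huv.1)
  exact dcCost_le_of_dcCost_compl_le G hT.1 (hT.perm hT')
    (dcCost_le_dcCost_node_of_perm Gᶜ hL_compl hR_compl (hT'.perm hT))

/-- Let `G` be the complement of a bipartite graph with color classes
`A` and `B = Aᶜ` (so `G[A]` and `G[B]` are complete, and the `A`–`B` edges of `G` are
arbitrary).  Then every HC-tree of `G` whose root separates `A` from `B` has minimum
DC-cost among all HC-trees of `G`. -/
theorem compl_bipartite_root_split_minCost {V : Type} [Fintype V] (G : SimpleGraph V)
    (A : Set V)
    (hA : ∀ u v : V, u ∈ A → v ∈ A → u ≠ v → G.Adj u v)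
    (hB : ∀ u v : V, u ∉ A → v ∉ A → u ≠ v → G.Adj u v)
    (L R : HCTree V) (hT : IsHCTree (HCTree.node L R))
    (hL : ∀ v ∈ L.leaves, v ∈ A) (hR : ∀ v ∈ R.leaves, v ∉ A) :
    ∀ T' : HCTree V, IsHCTree T' → dcCost G (HCTree.node L R) ≤ dcCost G T' :=
  compl_bipartite_root_split_minCost_general G A hA hB L R hT hL hR
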